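/- arXiv:2009.07609 — 6 statements merged into one kernel-verified Lean document; each statement's English description precedes it below -/
import Mathlib

section
/- Let N ≥ 17 be an integer, let a = (a₁, a₂) ∈ ℤ² \ {(0,0)} satisfy gcd(a₁, a₂, N) = 1, and let c be a real number with 3/4 ≤ c ≤ 1. Then the set of integer vectors S_a ∩ B_{N^c} contains at least N^{2c−1}/4 distinct elements, i.e. its cardinality, as a real number, is at least N^{2c−1}/4. -/
/-!
Let `φ v = a₁v₂ - a₂v₁ mod N`. When `gcd(a₁, a₂, N) = 1`, Bézout shows that `ker φ ⊆ S_a`.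
By pigeonhole, `φ` has a fibre containing at least `(M + 1)² / N` points of the box `[0, M]²`, where
`M = ⌊N^c⌋`; translating that fibre by one of its points lands it in `ker φ ∩ B_M`. Since
`(M + 1)² > N^{2c}`, this gives at least `N^{2c-1}` points.
-/

/-- `S_a = ℤ·a + N·ℤ² ⊆ ℤ²`. -/
def latticeSet (a : ℤ × ℤ) (N : ℕ) : Set (ℤ × ℤ) :=
  {v | ∃ k : ℤ, ∃ w : ℤ × ℤ, v = (k * a.1 + N * w.1, k * a.2 + N * w.2)}

open Finset Metric

lemma norm_intProd_eq_max_abs (v : ℤ × ℤ) : ‖v‖ = max |(v.1 : ℝ)| |(v.2 : ℝ)| := by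
  rw [Prod.norm_def, Int.norm_eq_abs, Int.norm_eq_abs]

lemma finite_inter_closedBall {α : Type*} [PseudoMetricSpace α] [ProperSpace α]
    [DiscreteTopology α] (s : Set α) (x : α) (r : ℝ) : (s ∩ closedBall x r).Finite :=
  (isCompact_closedBall x r).finite_of_discrete.inter_of_right s

lemma norm_intProd_sub_le_of_mem_Icc {M : ℕ} {p q : ℤ × ℤ}
    (hp : p ∈ Icc 0 ((M, M) : ℤ × ℤ)) (hq : q ∈ Icc 0 ((M, M) : ℤ × ℤ)) : ‖p - q‖ ≤ M := by
  simp only [mem_Icc, Prod.le_def, Prod.fst_zero, Prod.snd_zero] at hp hq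
  rw [norm_intProd_eq_max_abs, Prod.fst_sub, Prod.snd_sub]
  refine max_le ?_ ?_ <;> rw [← Int.cast_abs] <;>
    exact_mod_cast abs_sub_le_iff.mpr ⟨by omega, by omega⟩

lemma le_ncard_ker_inter_closedBall {G : Type*} [AddGroup G] [Fintype G] (φ : ℤ × ℤ →+ G)
    (M : ℕ) :
    ((M + 1) ^ 2 : ℝ) / Fintype.card G ≤ ((φ.ker : Set (ℤ × ℤ)) ∩ closedBall 0 M).ncard := by
  classical
  set box := Icc (0 : ℤ × ℤ) (M, M)
  have hbox : (#box : ℝ) = (M + 1) ^ 2 := by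
    rw [card_Icc_prod]
    simp only [Prod.fst_zero, Prod.snd_zero, Int.card_Icc, sub_zero, Int.toNat_natCast_add_one,
      Nat.cast_mul, Nat.cast_add, Nat.cast_one]
    ring
  obtain ⟨y, -, hy⟩ := exists_le_card_fiber_of_nsmul_le_card_of_maps_to (f := φ) (s := box)
    (t := univ) (b := ((M + 1) ^ 2 : ℝ) / Fintype.card G) (fun _ _ => mem_univ _) univ_nonempty
    (by rw [nsmul_eq_mul, hbox, card_univ]; field_simp; rfl)
  set fiber := {p ∈ box | φ p = y}
  obtain ⟨q, hq⟩ : fiber.Nonempty :=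
    card_pos.mp (by exact_mod_cast (by positivity : (0 : ℝ) < _).trans_le hy)
  have hsub : (fun p => p - q) '' fiber ⊆ (φ.ker : Set (ℤ × ℤ)) ∩ closedBall 0 M := by
    rintro _ ⟨p, hp, rfl⟩
    simp only [coe_filter, Set.mem_ofPred_eq, fiber] at hp
    rw [mem_filter] at hq
    exact ⟨by simp [hp.2, hq.2],
      mem_closedBall_zero_iff.mpr (norm_intProd_sub_le_of_mem_Icc hp.1 hq.1)⟩
  calc _ ≤ (#fiber : ℝ) := hy
    _ = ((fun p => p - q) '' fiber).ncard := by
      rw [Set.ncard_image_of_injective _ (sub_left_injective), Set.ncard_coe_finset]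
    _ ≤ _ := by exact_mod_cast Set.ncard_le_ncard hsub (finite_inter_closedBall _ _ _)

def detMod (a : ℤ × ℤ) (N : ℕ) : ℤ × ℤ →+ ZMod N :=
  AddMonoidHom.mk' (fun v => ((a.1 * v.2 - a.2 * v.1 : ℤ) : ZMod N)) fun u v => by
    simp only [Prod.fst_add, Prod.snd_add]; push_cast; ring

lemma ker_detMod_subset_latticeSet {a : ℤ × ℤ} {N : ℕ}
    (hgcd : Int.gcd (Int.gcd a.1 a.2) (N : ℤ) = 1) :
    ((detMod a N).ker : Set (ℤ × ℤ)) ⊆ latticeSet a N := by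
  rintro ⟨x₁, x₂⟩ hx
  obtain ⟨d, hd⟩ := (ZMod.intCast_zmod_eq_zero_iff_dvd _ N).mp hx
  obtain ⟨s, t, hst⟩ := Int.isCoprime_iff_gcd_eq_one.mpr hgcd
  rw [Int.gcd_eq_gcd_ab] at hst
  set u := s * Int.gcdA a.1 a.2
  set v := s * Int.gcdB a.1 a.2
  refine ⟨u * x₁ + v * x₂, (t * x₁ - v * d, t * x₂ + u * d), Prod.ext ?_ ?_⟩
  · linear_combination (-x₁) * hst - v * hd
  · linear_combination (-x₂) * hst + u * hd

theorem stmt5_general (N : ℕ) (hN : 17 ≤ N) (a : ℤ × ℤ)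
    (hgcd : Int.gcd (Int.gcd a.1 a.2) (N : ℤ) = 1)
    (c : ℝ) :
    (N : ℝ) ^ (2 * c - 1) / 4 ≤
      ({v : ℤ × ℤ | v ∈ latticeSet a N ∧
        max (|v.1| : ℝ) (|v.2| : ℝ) ≤ (N : ℝ) ^ c}).ncard := by
  have : NeZero N := ⟨by omega⟩
  have hN0 : (0 : ℝ) < N := by positivity
  have hpow : (N : ℝ) ^ (2 * c - 1) = ((N : ℝ) ^ c) ^ 2 / N := by
    rw [Real.rpow_sub_one hN0.ne', two_mul, Real.rpow_add hN0, sq]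
  set M := ⌊(N : ℝ) ^ c⌋₊
  calc (N : ℝ) ^ (2 * c - 1) / 4 ≤ ((N : ℝ) ^ c) ^ 2 / N := by
        rw [hpow]; exact div_le_self (by positivity) (by norm_num)
    _ ≤ ((M + 1) ^ 2 : ℝ) / Fintype.card (ZMod N) := by
        rw [ZMod.card]; gcongr; exact (Nat.lt_floor_add_one _).le
    _ ≤ ((detMod a N).ker ∩ closedBall 0 M : Set (ℤ × ℤ)).ncard :=
        le_ncard_ker_inter_closedBall _ M
    _ ≤ (latticeSet a N ∩ closedBall 0 ((N : ℝ) ^ c)).ncard := by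
        exact_mod_cast Set.ncard_le_ncard
          (Set.inter_subset_inter (ker_detMod_subset_latticeSet hgcd)
            (closedBall_subset_closedBall (Nat.floor_le (by positivity))))
          (finite_inter_closedBall _ _ _)
    _ = _ := by
        congr 2; ext v
        rw [Set.mem_inter_iff, mem_closedBall_zero_iff, norm_intProd_eq_max_abs]; rfl

theorem stmt5 (N : ℕ) (hN : 17 ≤ N) (a : ℤ × ℤ) (ha : a ≠ (0, 0))
    (hgcd : Int.gcd (Int.gcd a.1 a.2) (N : ℤ) = 1)
    (c : ℝ) (hc1 : 3 / 4 ≤ c) (hc2 : c ≤ 1) :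
    (N : ℝ) ^ (2 * c - 1) / 4 ≤
      ({v : ℤ × ℤ | v ∈ latticeSet a N ∧
        max (|v.1| : ℝ) (|v.2| : ℝ) ≤ (N : ℝ) ^ c}).ncard :=
  stmt5_general N hN a hgcd c
end

section
/- There exists an absolute constant C₁ ≥ 1 with the following property. For every integer N ≥ 17, every a = (a₁, a₂) ∈ ℤ² with gcd(a₁, a₂, N) = 1, every real c with 3/4 ≤ c ≤ 1, and every real C ≥ 1, there exist integers k₁, k₂ and an integer e ≥ 1 such that gcd(k₁, k₂) = 1, the vector e·(k₁, k₂) lies in S_a ∩ B_{N^c}, and either e ≤ C₁·C²·N^{1−c} or max(|k₁|, |k₂|) > C. -/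
open Finset

noncomputable def intBox (R : ℕ) : Finset (ℤ × ℤ) := Icc (-(R : ℤ)) R ×ˢ Icc (-(R : ℤ)) R

theorem mem_intBox {R : ℕ} {v : ℤ × ℤ} : v ∈ intBox R ↔ |v.1| ≤ R ∧ |v.2| ≤ R := by
  simp only [intBox, mem_product, mem_Icc, abs_le]

theorem card_intBox (R : ℕ) : #(intBox R) = (2 * R + 1) ^ 2 := by
  rw [intBox, card_product, Int.card_Icc, sq]
  congr 1 <;> omega

theorem gcd_le_of_mem_intBox {R : ℕ} {v : ℤ × ℤ} (hv : v ∈ intBox R) (h0 : v ≠ 0) :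
    Int.gcd v.1 v.2 ≤ R := by
  obtain ⟨h₁, h₂⟩ := mem_intBox.1 hv
  by_cases hv₁ : v.1 = 0
  · have hv₂ : v.2 ≠ 0 := fun h ↦ h0 (Prod.ext hv₁ h)
    have := Int.gcd_le_natAbs_right v.1 hv₂
    rw [← Int.natCast_natAbs] at h₂
    omega
  · have := Int.gcd_le_natAbs_left v.2 hv₁
    rw [← Int.natCast_natAbs] at h₁
    omega

def primitivePart (v : ℤ × ℤ) : ℤ × ℤ :=
  (v.1 / Int.gcd v.1 v.2, v.2 / Int.gcd v.1 v.2)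

theorem gcd_smul_primitivePart (v : ℤ × ℤ) : (Int.gcd v.1 v.2 : ℤ) • primitivePart v = v :=
  Prod.ext (Int.mul_ediv_cancel' (Int.gcd_dvd_left _ _))
    (Int.mul_ediv_cancel' (Int.gcd_dvd_right _ _))

theorem gcd_primitivePart {v : ℤ × ℤ} (hv : v ≠ 0) :
    Int.gcd (primitivePart v).1 (primitivePart v).2 = 1 :=
  Int.gcd_div_gcd_div_gcd <| Int.gcd_pos_iff.2 <| by
    by_contra! h
    exact hv (Prod.ext h.1 h.2)

theorem gcd_smul (n : ℤ) (k : ℤ × ℤ) : Int.gcd (n • k).1 (n • k).2 = n.natAbs * Int.gcd k.1 k.2 :=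
  Int.gcd_mul_left n k.1 k.2

theorem Nat.floor_div_lt_floor_div {a b E : ℝ} (hE : 0 < E) (ha : 0 ≤ a) (hab : a + E ≤ b) :
    ⌊a / E⌋₊ < ⌊b / E⌋₊ := by
  rw [Nat.lt_iff_add_one_le, ← Nat.floor_add_one (by positivity)]
  refine Nat.floor_le_floor ?_
  rwa [div_add_one hE.ne', div_le_div_iff_of_pos_right hE]

section Counting

variable (L : AddSubgroup (ℤ × ℤ)) {R : ℕ} {E : ℝ}

theorem gcd_add_lt_gcd_of_primitivePart_eq
    (hL : ∀ v ∈ L, v ∈ intBox R → v ≠ 0 → E < Int.gcd v.1 v.2)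
    {v w : ℤ × ℤ} (hv : v ∈ L) (hw : w ∈ L) (hwR : w ∈ intBox R)
    (hvw : primitivePart v = primitivePart w) (hlt : Int.gcd v.1 v.2 < Int.gcd w.1 w.2) :
    (Int.gcd v.1 v.2 : ℝ) + E < Int.gcd w.1 w.2 := by
  set k := primitivePart w
  set gv := Int.gcd v.1 v.2
  set gw := Int.gcd w.1 w.2
  have hv' : (gv : ℤ) • k = v := hvw ▸ gcd_smul_primitivePart v
  have hw' : (gw : ℤ) • k = w := gcd_smul_primitivePart w
  have hk : Int.gcd k.1 k.2 = 1 := by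
    have := gcd_smul gw k
    rw [hw', Int.natAbs_natCast] at this
    exact (Nat.mul_eq_left (by omega)).1 this.symm
  have hdiff : w - v = ((gw : ℤ) - gv) • k := by rw [sub_smul, hv', hw']
  have hgcd : (Int.gcd (w - v).1 (w - v).2 : ℤ) = gw - gv := by
    rw [hdiff, gcd_smul, hk, mul_one]
    omega
  have hbox : w - v ∈ intBox R := by
    obtain ⟨h₁, h₂⟩ := mem_intBox.1 hwR
    rw [← hw'] at h₁ h₂
    rw [mem_intBox, hdiff]
    simp only [Prod.smul_fst, Prod.smul_snd, smul_eq_mul, abs_mul] at h₁ h₂ ⊢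
    have : |(gw : ℤ) - gv| ≤ |(gw : ℤ)| := by rw [abs_of_nonneg, abs_of_nonneg] <;> omega
    exact ⟨(mul_le_mul_of_nonneg_right this (abs_nonneg _)).trans h₁,
      (mul_le_mul_of_nonneg_right this (abs_nonneg _)).trans h₂⟩
  have hne : w - v ≠ 0 := fun h ↦ by simp [h] at hgcd; omega
  have := hL _ (L.sub_mem hw hv) hbox hne
  rw [← Int.cast_natCast, hgcd] at this
  push_cast at this
  linarith

theorem card_filter_mem_intBox_le [DecidablePred (· ∈ L)] {D : ℕ} (hE : 0 < E)
    (hL : ∀ v ∈ L, v ∈ intBox R → v ≠ 0 →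
      E < Int.gcd v.1 v.2 ∧ primitivePart v ∈ intBox D) :
    #{v ∈ intBox R | v ∈ L} ≤ (2 * D + 1) ^ 2 * ⌊R / E⌋₊ + 1 := by
  set s := {v ∈ intBox R | v ∈ L}
  have hzero : (0 : ℤ × ℤ) ∈ s := mem_filter.2 ⟨mem_intBox.2 (by simp), L.zero_mem⟩
  have hmem : ∀ v ∈ s.erase 0, v ∈ L ∧ v ∈ intBox R ∧ v ≠ 0 := fun v hv ↦ by
    obtain ⟨hv0, hv⟩ := mem_erase.1 hv
    exact ⟨(mem_filter.1 hv).2, (mem_filter.1 hv).1, hv0⟩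
  have hinj : #(s.erase 0) ≤ #(intBox D ×ˢ Icc 1 ⌊R / E⌋₊) := by
    refine card_le_card_of_injOn (fun v ↦ (primitivePart v, ⌊(Int.gcd v.1 v.2 : ℝ) / E⌋₊))
      (fun v hv ↦ ?_) (fun v hv w hw hvw ↦ ?_)
    · obtain ⟨hvL, hvR, hv0⟩ := hmem v hv
      obtain ⟨hgE, hpp⟩ := hL v hvL hvR hv0
      refine mem_product.2 ⟨hpp, mem_Icc.2 ⟨?_, Nat.floor_le_floor ?_⟩⟩
      · exact Nat.le_floor (by rw [Nat.cast_one, one_le_div hE]; exact hgE.le)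
      · gcongr
        exact_mod_cast gcd_le_of_mem_intBox hvR hv0
    · obtain ⟨hvL, hvR, -⟩ := hmem v hv
      obtain ⟨hwL, hwR, -⟩ := hmem w hw
      obtain ⟨hpp, hfloor⟩ := Prod.ext_iff.1 hvw
      have hL' : ∀ u ∈ L, u ∈ intBox R → u ≠ 0 → E < Int.gcd u.1 u.2 :=
        fun u hu huR hu0 ↦ (hL u hu huR hu0).1
      have hg : Int.gcd v.1 v.2 = Int.gcd w.1 w.2 := by
        by_contra hne
        rcases Nat.lt_or_gt_of_ne hne with hlt | hlt
        · exact (Nat.floor_div_lt_floor_div hE (by positivity)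
            (gcd_add_lt_gcd_of_primitivePart_eq L hL' hvL hwL hwR hpp hlt).le).ne hfloor
        · exact (Nat.floor_div_lt_floor_div hE (by positivity)
            (gcd_add_lt_gcd_of_primitivePart_eq L hL' hwL hvL hvR hpp.symm hlt).le).ne' hfloor
      rw [← gcd_smul_primitivePart v, ← gcd_smul_primitivePart w, hg]
      exact congrArg _ hpp
  rw [← card_erase_add_one hzero]
  simpa [card_intBox] using hinj

end Counting

theorem sq_le_card_mul_card_filter_mem_ker {G : Type*} [AddCommGroup G] [Fintype G] [DecidableEq G]
    (φ : ℤ × ℤ →+ G) (r : ℕ) :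
    (2 * r + 1) ^ 2 ≤ Fintype.card G * #{v ∈ intBox (2 * r) | v ∈ φ.ker} := by
  by_contra! h
  rw [← card_intBox, ← card_univ] at h
  obtain ⟨y, -, hy⟩ := exists_lt_card_fiber_of_mul_lt_card_of_maps_to
    (fun v _ ↦ mem_univ (φ v)) h
  obtain ⟨v₀, hv₀⟩ := card_pos.1 (Nat.zero_lt_of_lt hy)
  refine hy.not_ge (card_le_card_of_injOn (· - v₀) (fun v hv ↦ ?_) (fun v _ w _ h ↦ ?_))
  · obtain ⟨hvr, hvy⟩ := mem_filter.1 hv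
    obtain ⟨hv₀r, hv₀y⟩ := mem_filter.1 hv₀
    refine mem_filter.2 ⟨?_, by simp [hvy, hv₀y]⟩
    obtain ⟨h₁, h₂⟩ := mem_intBox.1 hvr
    obtain ⟨h₀₁, h₀₂⟩ := mem_intBox.1 hv₀r
    rw [mem_intBox, abs_le, abs_le] at *
    push_cast
    simp only [Prod.fst_sub, Prod.snd_sub]
    omega
  · simpa using h

def crossHom (a : ℤ × ℤ) (N : ℕ) : ℤ × ℤ →+ ZMod N where
  toFun v := ((a.2 * v.1 - a.1 * v.2 : ℤ) : ZMod N)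
  map_zero' := by simp
  map_add' v w := by simp only [Prod.fst_add, Prod.snd_add]; push_cast; ring

theorem mem_latticeSet_iff_mem_ker {a : ℤ × ℤ} {N : ℕ}
    (ha : Int.gcd (Int.gcd a.1 a.2) (N : ℤ) = 1) {v : ℤ × ℤ} :
    v ∈ latticeSet a N ↔ v ∈ (crossHom a N).ker := by
  rw [AddMonoidHom.mem_ker, crossHom, AddMonoidHom.coe_mk, ZeroHom.coe_mk,
    ZMod.intCast_zmod_eq_zero_iff_dvd]
  constructor
  · rintro ⟨k, w, rfl⟩
    exact ⟨a.2 * w.1 - a.1 * w.2, by ring⟩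
  · rintro ⟨m, hm⟩
    obtain ⟨p, q, hpq⟩ := Int.isCoprime_iff_gcd_eq_one.2 ha
    -- `p (a₁ s + a₂ t) ≡ 1 mod N`, so `v ≡ p (s v₁ + t v₂) • a` once `a₂ v₁ ≡ a₁ v₂`
    rw [Int.gcd_eq_gcd_ab] at hpq
    set s := Int.gcdA a.1 a.2
    set t := Int.gcdB a.1 a.2
    refine ⟨p * s * v.1 + p * t * v.2, (p * t * m + q * v.1, q * v.2 - p * s * m), ?_⟩
    ext
    · linear_combination p * t * hm - v.1 * hpq
    · linear_combination -(p * s) * hm - v.2 * hpq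

theorem four_mul_le_rpow_sq {N c : ℝ} (hN : 16 ≤ N) (hc : 3 / 4 ≤ c) : 4 * N ≤ (N ^ c) ^ 2 := by
  have hN0 : 0 ≤ N := by linarith
  have hsqrt : 4 ≤ √N := Real.le_sqrt_of_sq_le (by linarith)
  calc 4 * N ≤ N * √N := by nlinarith
    _ = N ^ (3 / 2 : ℝ) := by
      rw [Real.sqrt_eq_rpow, ← Real.rpow_one_add' hN0 (by norm_num)]; norm_num
    _ ≤ N ^ (2 * c) := Real.rpow_le_rpow_of_exponent_le (by linarith) (by linarith)
    _ = (N ^ c) ^ 2 := by rw [mul_comm, Real.rpow_mul hN0]; norm_cast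

theorem mul_add_one_lt_sub_one_sq {N x E C : ℝ} (hN : 17 ≤ N) (hx : 4 * N ≤ x ^ 2) (hx0 : 0 ≤ x)
    (hE : 0 < E) (hEx : E * x = 100 * C ^ 2 * N) :
    N * ((3 * C) ^ 2 * (x / E) + 1) < (x - 1) ^ 2 := by
  have hNC : N * ((3 * C) ^ 2 * (x / E)) = 9 * x ^ 2 / 100 := by
    field_simp
    linear_combination -9 * x * hEx
  nlinarith

theorem gcd_gt_and_primitivePart_mem_intBox {S : Set (ℤ × ℤ)} {x E C : ℝ}
    (hS : ∀ k₁ k₂ e : ℤ, 1 ≤ e → Int.gcd k₁ k₂ = 1 → (e * k₁, e * k₂) ∈ S →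
      max (|(e * k₁ : ℤ)| : ℝ) (|(e * k₂ : ℤ)| : ℝ) ≤ x →
        E < e ∧ max (|k₁| : ℝ) (|k₂| : ℝ) ≤ C)
    {R : ℕ} (hR : (R : ℝ) ≤ x) {v : ℤ × ℤ} (hv : v ∈ S) (hvR : v ∈ intBox R) (hv0 : v ≠ 0) :
    E < Int.gcd v.1 v.2 ∧ primitivePart v ∈ intBox ⌊C⌋₊ := by
  have hv' := gcd_smul_primitivePart v
  set k := primitivePart v
  set g := Int.gcd v.1 v.2
  have hg : 0 < g := Int.gcd_pos_iff.2 <| by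
    by_contra! h
    exact hv0 (Prod.ext h.1 h.2)
  obtain ⟨h₁, h₂⟩ := mem_intBox.1 hvR
  have hbox : max (|(g * k.1 : ℤ)| : ℝ) (|(g * k.2 : ℤ)| : ℝ) ≤ x := by
    rw [← hv'] at h₁ h₂
    refine max_le (le_trans ?_ hR) (le_trans ?_ hR) <;> rw [← Int.cast_abs] <;> exact_mod_cast ‹_›
  obtain ⟨hgE, hkC⟩ := hS k.1 k.2 g (by omega) (gcd_primitivePart hv0) (by rwa [← hv'] at hv) hbox
  refine ⟨mod_cast hgE, mem_intBox.2 ⟨?_, ?_⟩⟩ <;>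
    rw [← Int.natCast_natAbs, Nat.cast_le] <;> refine Nat.le_floor ?_ <;>
    rw [Nat.cast_natAbs, Int.cast_abs]
  exacts [(le_max_left _ _).trans hkC, (le_max_right _ _).trans hkC]

theorem stmt6 :
    ∃ C₁ : ℝ, 1 ≤ C₁ ∧
      ∀ (N : ℕ), 17 ≤ N → ∀ a : ℤ × ℤ, Int.gcd (Int.gcd a.1 a.2) (N : ℤ) = 1 →
        ∀ c : ℝ, 3 / 4 ≤ c → c ≤ 1 → ∀ C : ℝ, 1 ≤ C →
          ∃ (k₁ k₂ e : ℤ), 1 ≤ e ∧ Int.gcd k₁ k₂ = 1 ∧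
            (e * k₁, e * k₂) ∈ latticeSet a N ∧
            max (|(e * k₁ : ℤ)| : ℝ) (|(e * k₂ : ℤ)| : ℝ) ≤ (N : ℝ) ^ c ∧
            ((e : ℝ) ≤ C₁ * C ^ 2 * (N : ℝ) ^ (1 - c) ∨
              C < max (|k₁| : ℝ) (|k₂| : ℝ)) := by
  refine ⟨100, by norm_num, fun N hN a ha c hc _ C hC ↦ ?_⟩
  by_contra! hS
  have : NeZero N := ⟨by omega⟩
  set x : ℝ := (N : ℝ) ^ c
  set E : ℝ := 100 * C ^ 2 * (N : ℝ) ^ (1 - c)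
  set r := ⌊x / 2⌋₊
  have hN' : (17 : ℝ) ≤ N := by exact_mod_cast hN
  have hx : 4 * (N : ℝ) ≤ x ^ 2 := four_mul_le_rpow_sq (by linarith) hc
  have hEx : E * x = 100 * C ^ 2 * N := by
    rw [mul_assoc, ← Real.rpow_add (by positivity), sub_add_cancel, Real.rpow_one]
  have hE : 0 < E := by positivity
  have hr : (2 * r : ℝ) ≤ x := by linarith [Nat.floor_le (by positivity : 0 ≤ x / 2)]
  have hcount := (sq_le_card_mul_card_filter_mem_ker (crossHom a N) r).trans <|
    Nat.mul_le_mul_left _ <| card_filter_mem_intBox_le _ (D := ⌊C⌋₊) hE fun v hv hvR hv0 ↦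
      gcd_gt_and_primitivePart_mem_intBox hS (by exact_mod_cast hr)
        ((mem_latticeSet_iff_mem_ker ha).2 hv) hvR hv0
  rw [ZMod.card] at hcount
  have hfloor : (⌊(2 * r : ℕ) / E⌋₊ : ℝ) ≤ x / E :=
    (Nat.floor_le (by positivity)).trans (by gcongr; exact_mod_cast hr)
  have hD : (2 * ⌊C⌋₊ + 1 : ℝ) ≤ 3 * C := by linarith [Nat.floor_le (by positivity : 0 ≤ C)]
  have hsq : ((2 * r + 1 : ℕ) : ℝ) ^ 2 ≤ N * ((3 * C) ^ 2 * (x / E) + 1) := by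
    calc _ ≤ (N * ((2 * ⌊C⌋₊ + 1) ^ 2 * ⌊(2 * r : ℕ) / E⌋₊ + 1) : ℝ) := by exact_mod_cast hcount
      _ ≤ _ := by gcongr
  have hrx : x - 1 ≤ 2 * r + 1 := by linarith [Nat.lt_floor_add_one (x / 2)]
  have hlt := mul_add_one_lt_sub_one_sq hN' hx (by positivity) hE hEx
  push_cast at hsq
  nlinarith
end

section
/- Let P ∈ ℂ[X,Y] be an irreducible polynomial of positive degree in X and of positive degree in Y, and let C = {(x,y) ∈ ℂ² : P(x,y) = 0}. Let U₁, U₂ ⊆ ℂ be bounded, open and connected. Assume C ∩ (U₁ × U₂) ≠ ∅ and C ∩ ((∂U₁ × U₂) ∪ (U₁ × ∂U₂)) = ∅, where ∂ denotes the topological boundary. Then: (i) for every u in the closure of U₁ there exists v in the closure of U₂ with (u,v) ∈ C; (ii) for every v in the closure of U₂ there exists u in the closure of U₁ with (u,v) ∈ C; (iii) every point (u,v) ∈ C with u in the closure of U₁ and v in the closure of U₂ satisfies: u ∈ ∂U₁ if and only if v ∈ ∂U₂. -/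
/-!
For fixed `u`, `v ↦ P(u, v)` is entire, and for `u ∈ U₁` it is not identically zero, since it
does not vanish on `∂U₂ ≠ ∅`. By the minimum modulus principle its zeros then persist under small
changes of `u`, so the set of `u ∈ U₁` over which the curve meets `U₁ × U₂` is open. The set of
`u` over which the curve misses `closure U₂` is open because `closure U₂` is compact, and the
boundary hypothesis makes the two sets cover `U₁`; connectedness of `U₁` leaves only the first,
and compactness of `closure U₂` passes the conclusion to `closure U₁`. Part (ii) is the same
argument with the coordinates swapped, and part (iii) is a reformulation of the boundary
hypothesis.
-/

open MvPolynomial Metric Set Filter Topology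

theorem MvPolynomial.differentiable_eval_comp {σ : Type*} [Fintype σ] (P : MvPolynomial σ ℂ)
    {x : ℂ → σ → ℂ} (hx : ∀ i, Differentiable ℂ (x · i)) :
    Differentiable ℂ fun z => eval (x z) P :=
  (differentiableOn_univ.1 (AnalyticOnNhd.eval_mvPolynomial P).differentiableOn).comp
    (differentiable_pi.2 hx)

/-- Minimum modulus principle, via the maximum modulus principle for `1 / g`. -/
theorem exists_mem_closedBall_eq_zero_of_norm_lt {g : ℂ → ℂ} {c : ℂ} {r m : ℝ} (hr : 0 < r)
    (hg : DifferentiableOn ℂ g (closedBall c r)) (hm : ∀ z ∈ sphere c r, m ≤ ‖g z‖)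
    (hc : ‖g c‖ < m) : ∃ z ∈ closedBall c r, g z = 0 := by
  by_contra! hne
  have hm₀ : 0 < m := (norm_nonneg _).trans_lt hc
  have hinv : DiffContOnCl ℂ (fun z => (g z)⁻¹) (ball c r) :=
    (hg.inv hne).diffContOnCl_ball subset_rfl
  have hbound : ∀ z ∈ frontier (ball c r), ‖(g z)⁻¹‖ ≤ m⁻¹ := by
    intro z hz
    rw [frontier_ball c hr.ne'] at hz
    rw [norm_inv]
    exact inv_anti₀ hm₀ (hm z hz)
  have hcenter := Complex.norm_le_of_forall_mem_frontier_norm_le isBounded_ball hinv hbound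
    (subset_closure (mem_ball_self hr))
  rw [norm_inv, inv_le_inv₀ (norm_pos_iff.2 (hne c (mem_closedBall_self hr.le))) hm₀] at hcenter
  exact hcenter.not_gt hc

/-- Hurwitz-type persistence: for `x` near `x₀`, `‖f (x, ·)‖` stays above some `m` on a small
circle around `z₀` and below `m` at `z₀`. -/
theorem eventually_exists_zero_of_isolated_zero {X : Type*} [TopologicalSpace X]
    {f : X × ℂ → ℂ} (hf : Continuous f) (hd : ∀ x, Differentiable ℂ fun z => f (x, z))
    {x₀ : X} {z₀ : ℂ} (h₀ : f (x₀, z₀) = 0) (hiso : ∀ᶠ z in 𝓝[≠] z₀, f (x₀, z) ≠ 0)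
    {V : Set ℂ} (hV : V ∈ 𝓝 z₀) : ∀ᶠ x in 𝓝 x₀, ∃ z ∈ V, f (x, z) = 0 := by
  obtain ⟨r, hr, hball⟩ := nhds_basis_closedBall.eventually_iff.1
    (Filter.Eventually.and hV (eventually_nhdsWithin_iff.1 hiso))
  have hsphere : ∀ z ∈ sphere z₀ r, f (x₀, z) ≠ 0 := fun z hz =>
    (hball (sphere_subset_closedBall hz)).2 (ne_of_mem_sphere hz hr.ne')
  obtain ⟨w, hw, hmin⟩ := (isCompact_sphere z₀ r).exists_isMinOn
    (NormedSpace.sphere_nonempty.2 hr.le)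
    (hf.comp (continuous_const.prodMk continuous_id)).norm.continuousOn
  set δ := ‖f (x₀, w)‖
  have hδ : 0 < δ := norm_pos_iff.2 (hsphere w hw)
  have hfar : ∀ᶠ x in 𝓝 x₀, ∀ z ∈ sphere z₀ r, δ / 2 ≤ ‖f (x, z)‖ := by
    refine (isCompact_sphere z₀ r).eventually_forall_of_forall_eventually fun z hz => ?_
    refine ((isOpen_lt continuous_const hf.norm).eventually_mem ?_).mono fun p hp => le_of_lt hp
    exact (half_lt_self hδ).trans_le (hmin hz)
  have hnear : ∀ᶠ x in 𝓝 x₀, ‖f (x, z₀)‖ < δ / 2 := by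
    refine (isOpen_lt (hf.comp (continuous_id.prodMk continuous_const)).norm
      continuous_const).eventually_mem ?_
    simpa [h₀] using half_pos hδ
  filter_upwards [hfar, hnear] with x hx hx₀
  obtain ⟨z, hz, hfz⟩ := exists_mem_closedBall_eq_zero_of_norm_lt hr
    (hd x).differentiableOn hx hx₀
  exact ⟨z, (hball hz).1, hfz⟩

theorem isOpen_inter_setOf_exists_zero {X : Type*} [TopologicalSpace X]
    {f : X × ℂ → ℂ} (hf : Continuous f) (hd : ∀ x, Differentiable ℂ fun z => f (x, z))
    {S : Set X} (hS : IsOpen S) (hS₀ : ∀ x ∈ S, ∃ z, f (x, z) ≠ 0) {T : Set ℂ} (hT : IsOpen T) :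
    IsOpen (S ∩ {x | ∃ z ∈ T, f (x, z) = 0}) := by
  refine isOpen_iff_mem_nhds.2 fun x ⟨hxS, z, hzT, hz⟩ => inter_mem (hS.mem_nhds hxS) ?_
  obtain ⟨w, hw⟩ := hS₀ x hxS
  have hiso : ∀ᶠ z' in 𝓝[≠] z, f (x, z') ≠ 0 := by
    by_contra h
    simp only [not_eventually, not_not] at h
    exact hw (AnalyticOnNhd.eqOn_zero_of_preconnected_of_frequently_eq_zero
      (fun z _ => (hd x).analyticAt z) isPreconnected_univ (mem_univ z) h (mem_univ w))
  exact eventually_exists_zero_of_isolated_zero hf hd hz hiso (hT.mem_nhds hzT)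

/-- The points of `S` over which `Z` meets `T` and those over which `Z` misses `closure T` form
two disjoint open sets (the latter by compactness) covering `S`. -/
theorem closure_subset_setOf_exists_mem_of_isPreconnected {X Y : Type*} [TopologicalSpace X]
    [TopologicalSpace Y] {Z : Set (X × Y)} (hZ : IsClosed Z) {S : Set X} {T : Set Y}
    (hS : IsPreconnected S) (hT : IsCompact (closure T))
    (hA : IsOpen (S ∩ {x | ∃ y ∈ T, (x, y) ∈ Z})) (hne : ∃ x ∈ S, ∃ y ∈ T, (x, y) ∈ Z)
    (hbd : ∀ x ∈ S, ∀ y ∈ frontier T, (x, y) ∉ Z) :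
    closure S ⊆ {x | ∃ y ∈ closure T, (x, y) ∈ Z} := by
  set B := {x | ∀ y ∈ closure T, (x, y) ∉ Z}
  have hB : IsOpen B := isOpen_iff_mem_nhds.2 fun x hx =>
    hT.eventually_forall_of_forall_eventually fun y hy => hZ.isOpen_compl.mem_nhds (hx y hy)
  have hcover : S ⊆ (S ∩ {x | ∃ y ∈ T, (x, y) ∈ Z}) ∪ B := by
    intro x hx
    by_cases h : ∃ y ∈ closure T, (x, y) ∈ Z
    · obtain ⟨y, hy, hxy⟩ := h
      rw [closure_eq_self_union_frontier] at hy
      exact Or.inl ⟨hx, y, hy.resolve_right fun hy' => hbd x hx y hy' hxy, hxy⟩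
    · exact Or.inr fun y hy hxy => h ⟨y, hy, hxy⟩
  have hdisj : Disjoint (S ∩ {x | ∃ y ∈ T, (x, y) ∈ Z}) B :=
    disjoint_left.2 fun x ⟨_, y, hy, hxy⟩ hxB => hxB y (subset_closure hy) hxy
  obtain ⟨x, hx, y, hy, hxy⟩ := hne
  have hSA := hS.subset_left_of_subset_union hA hB hdisj hcover ⟨x, hx, hx, y, hy, hxy⟩
  refine closure_minimal (fun x hx => ?_) (isOpen_compl_iff.1 ?_)
  · obtain ⟨_, y, hy, hxy⟩ := hSA hx
    exact ⟨y, subset_closure hy, hxy⟩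
  · convert hB using 1
    ext x
    simp [B]

theorem closure_subset_setOf_exists_zero {X : Type*} [TopologicalSpace X]
    {f : X × ℂ → ℂ} (hf : Continuous f) (hd : ∀ x, Differentiable ℂ fun z => f (x, z))
    {U₁ : Set X} {U₂ : Set ℂ} (hU₁o : IsOpen U₁) (hU₁c : IsPreconnected U₁)
    (hU₂b : Bornology.IsBounded U₂) (hU₂o : IsOpen U₂)
    (hne : ∃ x ∈ U₁, ∃ z ∈ U₂, f (x, z) = 0) (hbd : ∀ x ∈ U₁, ∀ z ∈ frontier U₂, f (x, z) ≠ 0) :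
    closure U₁ ⊆ {x | ∃ z ∈ closure U₂, f (x, z) = 0} := by
  obtain ⟨x, hx, z, hz, hxz⟩ := hne
  obtain ⟨w, hw⟩ : (frontier U₂).Nonempty := nonempty_frontier_iff.2
    ⟨⟨z, hz⟩, fun h => NormedSpace.unbounded_univ ℂ ℂ (h ▸ hU₂b)⟩
  exact closure_subset_setOf_exists_mem_of_isPreconnected (isClosed_eq hf continuous_const) hU₁c
    hU₂b.isCompact_closure
    (isOpen_inter_setOf_exists_zero hf hd hU₁o (fun x hx => ⟨w, hbd x hx w hw⟩) hU₂o)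
    ⟨x, hx, z, hz, hxz⟩ hbd

theorem stmt10_general
    (P : MvPolynomial (Fin 2) ℂ)
    (U₁ U₂ : Set ℂ)
    (hU₁b : Bornology.IsBounded U₁) (hU₁o : IsOpen U₁) (hU₁c : IsConnected U₁)
    (hU₂b : Bornology.IsBounded U₂) (hU₂o : IsOpen U₂) (hU₂c : IsConnected U₂)
    (hne : ∃ p : ℂ × ℂ, MvPolynomial.eval ![p.1, p.2] P = 0 ∧ p.1 ∈ U₁ ∧ p.2 ∈ U₂)
    (hbd : ¬ ∃ p : ℂ × ℂ, MvPolynomial.eval ![p.1, p.2] P = 0 ∧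
      ((p.1 ∈ frontier U₁ ∧ p.2 ∈ U₂) ∨ (p.1 ∈ U₁ ∧ p.2 ∈ frontier U₂))) :
    (∀ u ∈ closure U₁, ∃ v ∈ closure U₂, MvPolynomial.eval ![u, v] P = 0) ∧
    (∀ v ∈ closure U₂, ∃ u ∈ closure U₁, MvPolynomial.eval ![u, v] P = 0) ∧
    (∀ u v : ℂ, MvPolynomial.eval ![u, v] P = 0 → u ∈ closure U₁ → v ∈ closure U₂ →
      (u ∈ frontier U₁ ↔ v ∈ frontier U₂)) := by
  have hf : Continuous fun p : ℂ × ℂ => eval ![p.1, p.2] P :=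
    (continuous_eval P).comp (continuous_pi (Fin.forall_fin_two.2 ⟨continuous_fst, continuous_snd⟩))
  have hdv (u : ℂ) : Differentiable ℂ fun v => eval ![u, v] P :=
    differentiable_eval_comp P (Fin.forall_fin_two.2 ⟨differentiable_const u, differentiable_id⟩)
  have hdu (v : ℂ) : Differentiable ℂ fun u => eval ![u, v] P :=
    differentiable_eval_comp P (Fin.forall_fin_two.2 ⟨differentiable_id, differentiable_const v⟩)
  obtain ⟨⟨u₀, v₀⟩, h₀, hu₀, hv₀⟩ := hne
  refine ⟨closure_subset_setOf_exists_zero hf hdv hU₁o hU₁c.isPreconnected hU₂b hU₂o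
      ⟨u₀, hu₀, v₀, hv₀, h₀⟩ (fun u hu v hv h => hbd ⟨(u, v), h, Or.inr ⟨hu, hv⟩⟩),
    closure_subset_setOf_exists_zero (hf.comp continuous_swap) hdu hU₂o hU₂c.isPreconnected hU₁b
      hU₁o ⟨v₀, hv₀, u₀, hu₀, h₀⟩ (fun v hv u hu h => hbd ⟨(u, v), h, Or.inl ⟨hu, hv⟩⟩), ?_⟩
  intro u v h hu hv
  rw [closure_eq_self_union_frontier] at hu hv
  constructor
  · exact fun hu' => hv.resolve_left fun hv' => hbd ⟨(u, v), h, Or.inl ⟨hu', hv'⟩⟩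
  · exact fun hv' => hu.resolve_left fun hu' => hbd ⟨(u, v), h, Or.inr ⟨hu', hv'⟩⟩

theorem stmt10
    (P : MvPolynomial (Fin 2) ℂ) (hP : Irreducible P)
    (hdX : 0 < P.degreeOf 0) (hdY : 0 < P.degreeOf 1)
    (U₁ U₂ : Set ℂ)
    (hU₁b : Bornology.IsBounded U₁) (hU₁o : IsOpen U₁) (hU₁c : IsConnected U₁)
    (hU₂b : Bornology.IsBounded U₂) (hU₂o : IsOpen U₂) (hU₂c : IsConnected U₂)
    (hne : ∃ p : ℂ × ℂ, MvPolynomial.eval ![p.1, p.2] P = 0 ∧ p.1 ∈ U₁ ∧ p.2 ∈ U₂)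
    (hbd : ¬ ∃ p : ℂ × ℂ, MvPolynomial.eval ![p.1, p.2] P = 0 ∧
      ((p.1 ∈ frontier U₁ ∧ p.2 ∈ U₂) ∨ (p.1 ∈ U₁ ∧ p.2 ∈ frontier U₂))) :
    (∀ u ∈ closure U₁, ∃ v ∈ closure U₂, MvPolynomial.eval ![u, v] P = 0) ∧
    (∀ v ∈ closure U₂, ∃ u ∈ closure U₁, MvPolynomial.eval ![u, v] P = 0) ∧
    (∀ u v : ℂ, MvPolynomial.eval ![u, v] P = 0 → u ∈ closure U₁ → v ∈ closure U₂ →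
      (u ∈ frontier U₁ ↔ v ∈ frontier U₂)) :=
  stmt10_general P U₁ U₂ hU₁b hU₁o hU₁c hU₂b hU₂o hU₂c hne hbd
end

section
/- Let P ∈ ℂ[X,Y] be an irreducible polynomial of positive degree in X and of positive degree in Y, and let C = {(x,y) ∈ ℂ² : P(x,y) = 0}. Let U₁, U₂ ⊆ ℂ be bounded, open and connected, and assume that the boundaries ∂U₁ and ∂U₂ contain no isolated points. If C ∩ ((∂U₁ × U₂) ∪ (U₁ × ∂U₂)) is non-empty, then it is infinite. -/
/-! Take `(a, b)` in the set with `a ∈ ∂U₁` and `b ∈ U₂`. If `P(a, ·)` vanishes identically,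
the line `{a} × U₂` lies in the set. Otherwise the roots of `P(x, ·)` move continuously with
`x`: writing `P(x, ·)` as a product of linear factors, `|P(x, z)| ≤ (3/2)^deg |P(x, b)|` as long
as every root is at least `2|z - b|` away from `b`, and for `z` near `b` with
`P(a, z) ≠ 0 = P(a, b)` this fails for all `x` near `a`. So every `x` near `a` has a root of
`P(x, ·)` inside `U₂`, and since `a` is not isolated in `∂U₁` infinitely many such `x` lie on
`∂U₁`. The other case is the same after exchanging the variables. -/

open Polynomial Filter Topology

namespace Polynomial

variable {K : Type*} [NormedField K] [IsAlgClosed K]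

theorem norm_eval_eq_prod_roots (p : K[X]) (y : K) :
    ‖p.eval y‖ = ‖p.leadingCoeff‖ * (p.roots.map fun r => ‖y - r‖).prod := by
  rw [(IsAlgClosed.splits p).eval_eq_prod_roots, norm_mul]
  congr 1
  simpa [Multiset.map_map] using map_multiset_prod (normHom (α := K)) (p.roots.map (y - ·))

theorem norm_eval_le_of_two_mul_dist_le_roots {p : K[X]} {b z : K}
    (hroots : ∀ r ∈ p.roots, 2 * ‖z - b‖ ≤ ‖b - r‖) :
    ‖p.eval z‖ ≤ (3 / 2) ^ p.natDegree * ‖p.eval b‖ := by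
  have hfactor : ∀ r ∈ p.roots, ‖z - r‖ ≤ 3 / 2 * ‖b - r‖ := fun r hr => by
    linarith [norm_sub_le_norm_sub_add_norm_sub z b r, hroots r hr]
  calc ‖p.eval z‖ = ‖p.leadingCoeff‖ * (p.roots.map fun r => ‖z - r‖).prod :=
        norm_eval_eq_prod_roots p z
    _ ≤ ‖p.leadingCoeff‖ * (p.roots.map fun r => 3 / 2 * ‖b - r‖).prod := by
        gcongr
        exact Multiset.prod_map_le_prod_map₀ _ _ (fun _ _ => norm_nonneg _) hfactor
    _ = (3 / 2) ^ p.natDegree * ‖p.eval b‖ := by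
        rw [Multiset.prod_map_mul, Multiset.map_const', Multiset.prod_replicate,
          ← (IsAlgClosed.splits p).natDegree_eq_card_roots, norm_eval_eq_prod_roots p b]
        ring

end Polynomial

namespace MvPolynomial

variable {R : Type*} [CommSemiring R]

noncomputable def fiberPoly (P : MvPolynomial (Fin 2) R) (x : R) : R[X] :=
  eval₂ Polynomial.C ![Polynomial.C x, Polynomial.X] P

theorem eval_fiberPoly (P : MvPolynomial (Fin 2) R) (x y : R) :
    (fiberPoly P x).eval y = eval ![x, y] P := by
  rw [fiberPoly, polynomial_eval_eval₂]
  congr 1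
  · ext; simp
  · ext i; fin_cases i <;> simp

theorem natDegree_fiberPoly_le (P : MvPolynomial (Fin 2) R) (x : R) :
    (fiberPoly P x).natDegree ≤ P.totalDegree := by
  rw [fiberPoly, eval₂_eq]
  refine natDegree_sum_le_of_forall_le _ _ fun d hd => ?_
  refine natDegree_C_mul_le _ _ |>.trans <| natDegree_prod_le _ _ |>.trans ?_
  refine le_trans (Finset.sum_le_sum fun i _ => natDegree_pow_le (n := d i)) ?_
  refine le_trans (Finset.sum_le_sum fun i _ => ?_) (le_totalDegree hd)
  fin_cases i
  · simp
  · simpa using Nat.mul_le_mul_left (d 1) natDegree_X_le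

end MvPolynomial

open MvPolynomial

theorem continuous_eval_fin_two_left {R : Type*} [CommSemiring R] [TopologicalSpace R]
    [IsTopologicalSemiring R] (P : MvPolynomial (Fin 2) R) (y : R) :
    Continuous fun x : R => eval ![x, y] P :=
  (continuous_eval P).comp (by fun_prop)

section BivariateZeros

variable {K : Type*} [NontriviallyNormedField K] [IsAlgClosed K]

theorem eventually_exists_eval_eq_zero_near (P : MvPolynomial (Fin 2) K) {a b : K}
    (hfiber : fiberPoly P a ≠ 0) (hab : eval ![a, b] P = 0) {ε : ℝ} (hε : 0 < ε) :
    ∀ᶠ x in 𝓝 a, ∃ y, dist y b < ε ∧ eval ![x, y] P = 0 := by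
  obtain ⟨z, hzb, hza⟩ : ∃ z ∈ Metric.ball b (ε / 2), eval ![a, z] P ≠ 0 := by
    obtain ⟨z, hzb, hz⟩ := ((infinite_of_mem_nhds b (Metric.ball_mem_nhds b (half_pos hε))).sdiff
      (Polynomial.finite_setOfPred_isRoot hfiber)).nonempty
    exact ⟨z, hzb, by rwa [← eval_fiberPoly]⟩
  have hnear : ∀ᶠ x in 𝓝 a, (3 / 2) ^ P.totalDegree * ‖eval ![x, b] P‖ < ‖eval ![x, z] P‖ :=
    ContinuousAt.eventually_lt
      (continuous_const.mul (continuous_eval_fin_two_left P b).norm).continuousAt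
      (continuous_eval_fin_two_left P z).norm.continuousAt (by simpa [hab] using hza)
  filter_upwards [hnear] with x hx
  by_contra! hfar
  have hroots : ∀ r ∈ (fiberPoly P x).roots, 2 * ‖z - b‖ ≤ ‖b - r‖ := fun r hr => by
    have hr_far : ε ≤ dist r b := not_lt.mp fun h => hfar r h (by
      rw [← eval_fiberPoly]; exact (mem_roots'.mp hr).2)
    rw [Metric.mem_ball, dist_eq_norm] at hzb
    rw [dist_eq_norm, norm_sub_rev] at hr_far
    linarith
  have hle := norm_eval_le_of_two_mul_dist_le_roots hroots
  rw [eval_fiberPoly, eval_fiberPoly] at hle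
  have hdeg : (3 / 2 : ℝ) ^ (fiberPoly P x).natDegree ≤ (3 / 2) ^ P.totalDegree :=
    pow_le_pow_right₀ (by norm_num) (natDegree_fiberPoly_le P x)
  nlinarith [norm_nonneg (eval ![x, b] P)]

theorem infinite_zeroSet_inter_prod (P : MvPolynomial (Fin 2) K) {a b : K}
    (hab : eval ![a, b] P = 0) {A B : Set K} (ha : a ∈ A) (hacc : AccPt a (𝓟 A))
    (hB : IsOpen B) (hb : b ∈ B) :
    {p : K × K | eval ![p.1, p.2] P = 0 ∧ p.1 ∈ A ∧ p.2 ∈ B}.Infinite := by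
  by_cases hfiber : fiberPoly P a = 0
  · have hline : (a, ·) '' B ⊆ {p : K × K | eval ![p.1, p.2] P = 0 ∧ p.1 ∈ A ∧ p.2 ∈ B} := by
      rintro _ ⟨y, hy, rfl⟩
      exact ⟨by rw [← eval_fiberPoly, hfiber, Polynomial.eval_zero], ha, hy⟩
    exact ((infinite_of_mem_nhds b (hB.mem_nhds hb)).image
      (Prod.mk_right_injective a).injOn).mono hline
  · obtain ⟨ε, hε, hball⟩ := Metric.isOpen_iff.mp hB b hb
    obtain ⟨V, hV, hroot⟩ := (eventually_exists_eval_eq_zero_near P hfiber hab hε).exists_mem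
    refine Set.Infinite.of_image Prod.fst <| (Set.Infinite.of_accPt (hacc.nhds_inter hV)).mono ?_
    rintro x ⟨hxV, hxA⟩
    obtain ⟨y, hyb, hy⟩ := hroot x hxV
    exact ⟨(x, y), ⟨hy, hxA, hball hyb⟩, rfl⟩

end BivariateZeros

theorem eval_rename_swap {R : Type*} [CommSemiring R] (P : MvPolynomial (Fin 2) R) (x y : R) :
    eval ![x, y] (rename (Equiv.swap 0 1) P) = eval ![y, x] P := by
  have hswap : ![x, y] ∘ Equiv.swap (0 : Fin 2) 1 = ![y, x] := by
    funext i
    fin_cases i <;> rfl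
  rw [eval_rename, hswap]

theorem stmt11_general
    (P : MvPolynomial (Fin 2) ℂ)
    (U₁ U₂ : Set ℂ)
    (hU₁o : IsOpen U₁)
    (hU₂o : IsOpen U₂)
    -- the boundaries contain no isolated points
    (hU₁i : ∀ p ∈ frontier U₁, AccPt p (Filter.principal (frontier U₁)))
    (hU₂i : ∀ p ∈ frontier U₂, AccPt p (Filter.principal (frontier U₂)))
    (hne : {p : ℂ × ℂ | MvPolynomial.eval ![p.1, p.2] P = 0 ∧
      ((p.1 ∈ frontier U₁ ∧ p.2 ∈ U₂) ∨ (p.1 ∈ U₁ ∧ p.2 ∈ frontier U₂))}.Nonempty) :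
    {p : ℂ × ℂ | MvPolynomial.eval ![p.1, p.2] P = 0 ∧
      ((p.1 ∈ frontier U₁ ∧ p.2 ∈ U₂) ∨ (p.1 ∈ U₁ ∧ p.2 ∈ frontier U₂))}.Infinite := by
  obtain ⟨⟨a, b⟩, hab, ⟨ha, hb⟩ | ⟨ha, hb⟩⟩ := hne
  · refine (infinite_zeroSet_inter_prod P hab ha (hU₁i a ha) hU₂o hb).mono ?_
    rintro p ⟨hp, hp₁, hp₂⟩
    exact ⟨hp, .inl ⟨hp₁, hp₂⟩⟩
  · have hba : eval ![b, a] (rename (Equiv.swap 0 1) P) = 0 := by rwa [eval_rename_swap]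
    refine ((infinite_zeroSet_inter_prod _ hba hb (hU₂i b hb) hU₁o ha).image
      Prod.swap_injective.injOn).mono ?_
    rintro _ ⟨⟨x, y⟩, ⟨hp, hx, hy⟩, rfl⟩
    exact ⟨by rwa [eval_rename_swap] at hp, .inr ⟨hy, hx⟩⟩

theorem stmt11
    (P : MvPolynomial (Fin 2) ℂ) (hP : Irreducible P)
    (hdX : 0 < P.degreeOf 0) (hdY : 0 < P.degreeOf 1)
    (U₁ U₂ : Set ℂ)
    (hU₁b : Bornology.IsBounded U₁) (hU₁o : IsOpen U₁) (hU₁c : IsConnected U₁)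
    (hU₂b : Bornology.IsBounded U₂) (hU₂o : IsOpen U₂) (hU₂c : IsConnected U₂)
    -- the boundaries contain no isolated points
    (hU₁i : ∀ p ∈ frontier U₁, AccPt p (Filter.principal (frontier U₁)))
    (hU₂i : ∀ p ∈ frontier U₂, AccPt p (Filter.principal (frontier U₂)))
    (hne : {p : ℂ × ℂ | MvPolynomial.eval ![p.1, p.2] P = 0 ∧
      ((p.1 ∈ frontier U₁ ∧ p.2 ∈ U₂) ∨ (p.1 ∈ U₁ ∧ p.2 ∈ frontier U₂))}.Nonempty) :
    {p : ℂ × ℂ | MvPolynomial.eval ![p.1, p.2] P = 0 ∧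
      ((p.1 ∈ frontier U₁ ∧ p.2 ∈ U₂) ∨ (p.1 ∈ U₁ ∧ p.2 ∈ frontier U₂))}.Infinite :=
  stmt11_general P U₁ U₂ hU₁o hU₂o hU₁i hU₂i hne
end

section
/- Let f ∈ ℂ[X] be a monic polynomial of degree d ≥ 2 and let L(X) = aX + b with a ≠ 0 be a linear polynomial satisfying L(f(X)) = f(L(X)) as polynomials. Suppose R' > 0 and Φ is an analytic function on {z ∈ ℂ : |z| > R'} such that Φ(z)/z → 1 as |z| → ∞ and Φ(f(z)) = Φ(z)^d whenever |z| > R' and |f(z)| > R'. Then there exist ζ ∈ ℂ with ζ^{d−1} = 1 and a real R'' ≥ R' such that Φ(L(z)) = ζ·Φ(z) for all z with |z| > R''. -/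
/-!
Put `g z = Φ (a z + b) / Φ z`. Since `Φ z ~ z` at infinity, `g` tends to `a` there, and the
commutation `L ∘ f = f ∘ L` turns the Böttcher equation into `g (f z) = g z ^ d`. Along the
escaping orbit of a large `z` the values `g z ^ d ^ n` therefore converge to `a ≠ 0`, which
forces `‖g z‖ = 1`. By the maximum modulus principle on the connected region `{R < ‖z‖}`, `g`
is constant, necessarily equal to `a`, and `a = g (f z) = a ^ d`.
-/

open Polynomial Filter Topology Bornology Set Metric

theorem exists_forall_lt_norm_of_eventually_cobounded {E : Type*} [SeminormedAddCommGroup E]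
    {P : E → Prop} (h : ∀ᶠ z in cobounded E, P z) (R₀ : ℝ) :
    ∃ R, R₀ ≤ R ∧ ∀ z, R < ‖z‖ → P z := by
  rw [← comap_norm_atTop, eventually_comap, eventually_atTop] at h
  obtain ⟨R, hR⟩ := h
  exact ⟨max R₀ R, le_max_left _ _, fun z hz => hR _ (max_lt_iff.1 hz).2.le z rfl⟩

theorem isPreconnected_setOf_lt_norm {E : Type*} [NormedAddCommGroup E] [NormedSpace ℝ E]
    (hE : 1 < Module.rank ℝ E) (R : ℝ) : IsPreconnected {z : E | R < ‖z‖} := by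
  rcases lt_or_ge R 0 with hR | hR
  · have hall : {z : E | R < ‖z‖} = univ :=
      eq_univ_of_forall fun z => hR.trans_le (norm_nonneg z)
    exact hall ▸ isPreconnected_univ
  have hpolar : (fun p : ℝ × E => p.1 • p.2) '' (Ioi R ×ˢ sphere 0 1) = {z | R < ‖z‖} := by
    ext w
    constructor
    · rintro ⟨⟨r, u⟩, ⟨hr, hu⟩, rfl⟩
      have hr : R < r := hr
      simp_all [norm_smul, abs_of_pos (hR.trans_lt hr)]
    · intro hw
      have hw : R < ‖w‖ := hw
      have hw0 : ‖w‖ ≠ 0 := (hR.trans_lt hw).ne'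
      exact ⟨(‖w‖, ‖w‖⁻¹ • w), ⟨hw, by simp [norm_smul, hw0]⟩, smul_inv_smul₀ hw0 w⟩
  exact hpolar ▸ (isPreconnected_Ioi.prod (isPreconnected_sphere hE 0 1)).image _
    (by fun_prop)

theorem tendsto_affine_cobounded {𝕜 : Type*} [NormedDivisionRing 𝕜] {a : 𝕜} (ha : a ≠ 0)
    (b : 𝕜) : Tendsto (fun z => a * z + b) (cobounded 𝕜) (cobounded 𝕜) :=
  (tendsto_add_const_cobounded b).comp (tendsto_mul_left_cobounded ha)

theorem Polynomial.eventually_norm_add_one_le_norm_eval {R : Type*} [NormedRing R]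
    [NormMulClass R] [Nontrivial R] {p : R[X]} (hp : 1 < p.degree) :
    ∀ᶠ z in cobounded R, ‖z‖ + 1 ≤ ‖p.eval z‖ := by
  have hX : (fun z : R => z) =o[cobounded R] p.eval := by
    simpa using isLittleO_cobounded_of_degree_lt (P := X) (Q := p) (by rwa [degree_X])
  filter_upwards [hX.bound (by norm_num : (0:ℝ) < 1 / 2),
    tendsto_norm_cobounded_atTop.eventually_ge_atTop 1] with z hz h1
  linarith

section Escape

variable {E : Type*} [SeminormedAddCommGroup E] {T : E → E} {R : ℝ}

theorem norm_add_nat_le_norm_iterate (hT : ∀ z, R < ‖z‖ → ‖z‖ + 1 ≤ ‖T z‖) {z : E}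
    (hz : R < ‖z‖) (n : ℕ) : ‖z‖ + n ≤ ‖T^[n] z‖ := by
  induction n with
  | zero => simp
  | succ n ih =>
    have hn : R < ‖T^[n] z‖ := by linarith [Nat.cast_nonneg (α := ℝ) n]
    rw [Function.iterate_succ_apply', Nat.cast_succ]
    linarith [hT _ hn]

theorem tendsto_iterate_cobounded (hT : ∀ z, R < ‖z‖ → ‖z‖ + 1 ≤ ‖T z‖) {z : E}
    (hz : R < ‖z‖) : Tendsto (fun n => T^[n] z) atTop (cobounded E) := by
  rw [← tendsto_norm_atTop_iff_cobounded]
  exact tendsto_atTop_mono (norm_add_nat_le_norm_iterate hT hz)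
    (tendsto_atTop_add_const_left _ _ tendsto_natCast_atTop_atTop)

end Escape

theorem iterate_eq_pow_pow_of_mapsTo {α M : Type*} [Monoid M] {T : α → α} {g : α → M}
    {S : Set α} {d : ℕ} (hS : MapsTo T S S) (hg : ∀ z ∈ S, g (T z) = g z ^ d) {z : α}
    (hz : z ∈ S) (n : ℕ) : g (T^[n] z) = g z ^ d ^ n := by
  induction n with
  | zero => simp
  | succ n ih =>
    rw [Function.iterate_succ_apply', hg _ (hS.iterate n hz), ih, ← pow_mul, pow_succ]

theorem norm_eq_one_of_tendsto_pow_pow {𝕜 : Type*} [NormedDivisionRing 𝕜] {w c : 𝕜} (hc : c ≠ 0)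
    {d : ℕ} (hd : 1 < d) (h : Tendsto (fun n : ℕ => w ^ d ^ n) atTop (𝓝 c)) : ‖w‖ = 1 := by
  have hnorm : Tendsto (fun n : ℕ => ‖w‖ ^ d ^ n) atTop (𝓝 ‖c‖) := by
    simpa only [norm_pow] using h.norm
  have hdn : Tendsto (fun n : ℕ => d ^ n) atTop atTop := tendsto_pow_atTop_atTop_of_one_lt hd
  rcases lt_trichotomy ‖w‖ 1 with hlt | heq | hgt
  · have h0 := (tendsto_pow_atTop_nhds_zero_of_lt_one (norm_nonneg w) hlt).comp hdn
    exact absurd (tendsto_nhds_unique hnorm h0) (norm_ne_zero_iff.2 hc)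
  · exact heq
  · exact absurd hnorm (not_tendsto_nhds_of_tendsto_atTop
      ((tendsto_pow_atTop_atTop_of_one_lt hgt).comp hdn) _)

theorem norm_eq_one_of_mapsTo_of_eq_pow {α 𝕜 : Type*} [NormedDivisionRing 𝕜] {T : α → α}
    {g : α → 𝕜} {S : Set α} {l : Filter α} {c : 𝕜} {d : ℕ} (hd : 1 < d) (hc : c ≠ 0)
    (hS : MapsTo T S S) (hg : ∀ z ∈ S, g (T z) = g z ^ d)
    (horbit : ∀ z ∈ S, Tendsto (fun n => T^[n] z) atTop l) (hlim : Tendsto g l (𝓝 c))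
    {z : α} (hz : z ∈ S) : ‖g z‖ = 1 :=
  norm_eq_one_of_tendsto_pow_pow hc hd <|
    (hlim.comp (horbit z hz)).congr (iterate_eq_pow_pow_of_mapsTo hS hg hz)

theorem eqOn_const_of_norm_eqOn_of_tendsto {E F : Type*} [NormedAddCommGroup E]
    [NormedSpace ℂ E] [NormedAddCommGroup F] [NormedSpace ℂ F] [StrictConvexSpace ℝ F]
    {g : E → F} {U : Set E} {r : ℝ} {l : Filter E} [l.NeBot] {c : F}
    (hc : IsPreconnected U) (ho : IsOpen U) (hd : DifferentiableOn ℂ g U)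
    (hnorm : ∀ z ∈ U, ‖g z‖ = r) (hUl : U ∈ l) (hlim : Tendsto g l (𝓝 c)) :
    EqOn g (fun _ => c) U := by
  obtain ⟨z₀, hz₀⟩ := Filter.nonempty_of_mem hUl
  have hconst : EqOn g (Function.const E (g z₀)) U :=
    Complex.eqOn_of_isPreconnected_of_isMaxOn_norm hc ho hd hz₀
      fun z hz => (hnorm z hz).trans_le (hnorm z₀ hz₀).ge
  have hc : g z₀ = c :=
    tendsto_nhds_unique (tendsto_const_nhds.congr' (eventuallyEq_of_mem hUl hconst).symm) hlim
  exact hc ▸ hconst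

theorem tendsto_div_comp_affine {𝕜 : Type*} [NormedField 𝕜] {Φ : 𝕜 → 𝕜}
    (hΦ : Tendsto (fun z => Φ z / z) (cobounded 𝕜) (𝓝 1)) {a : 𝕜} (ha : a ≠ 0) (b : 𝕜) :
    Tendsto (fun z => Φ (a * z + b) / Φ z) (cobounded 𝕜) (𝓝 a) := by
  have hL := tendsto_affine_cobounded ha b
  have hslope : Tendsto (fun z => a + b * z⁻¹) (cobounded 𝕜) (𝓝 a) := by
    simpa using tendsto_const_nhds.add (tendsto_const_nhds.mul (tendsto_inv₀_cobounded (α := 𝕜)))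
  have h := ((hΦ.comp hL).mul hslope).div hΦ one_ne_zero
  rw [one_mul, div_one] at h
  refine h.congr' ?_
  filter_upwards [eventually_ne_cobounded 0, hL.eventually_ne_cobounded 0] with z hz hLz
  simp only [Function.comp_apply, Pi.div_apply]
  field_simp

theorem eqOn_const_and_pow_pred_eq_one_of_eq_pow_comp {T g : ℂ → ℂ} {R : ℝ} {c : ℂ} {d : ℕ}
    (hd : 1 < d) (hc : c ≠ 0) (hT : ∀ z, R < ‖z‖ → ‖z‖ + 1 ≤ ‖T z‖)
    (hg : ∀ z, R < ‖z‖ → g (T z) = g z ^ d) (hdiff : DifferentiableOn ℂ g {z | R < ‖z‖})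
    (hlim : Tendsto g (cobounded ℂ) (𝓝 c)) :
    EqOn g (fun _ => c) {z | R < ‖z‖} ∧ c ^ (d - 1) = 1 := by
  have hmaps : MapsTo T {z | R < ‖z‖} {z | R < ‖z‖} := fun z (hz : R < ‖z‖) =>
    show R < ‖T z‖ by linarith [hT z hz]
  have hnorm : ∀ z ∈ {z : ℂ | R < ‖z‖}, ‖g z‖ = 1 :=
    fun z hz => norm_eq_one_of_mapsTo_of_eq_pow hd hc hmaps hg
      (fun _ hw => tendsto_iterate_cobounded hT hw) hlim hz
  have hV : {z : ℂ | R < ‖z‖} ∈ cobounded ℂ :=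
    tendsto_norm_cobounded_atTop.eventually_gt_atTop R
  have hconst : EqOn g (fun _ => c) {z | R < ‖z‖} := eqOn_const_of_norm_eqOn_of_tendsto
    (isPreconnected_setOf_lt_norm (by simp) R) (isOpen_lt continuous_const continuous_norm)
    hdiff hnorm hV hlim
  obtain ⟨z₀, hz₀⟩ := Filter.nonempty_of_mem hV
  have hfixed : c ^ d = c :=
    calc c ^ d = g z₀ ^ d := by rw [show g z₀ = c from hconst hz₀]
      _ = g (T z₀) := (hg z₀ hz₀).symm
      _ = c := hconst (hmaps hz₀)
  refine ⟨hconst, mul_left_cancel₀ hc ?_⟩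
  rw [← pow_succ', Nat.sub_add_cancel hd.le, hfixed, mul_one]

theorem stmt16_general
    (f : Polynomial ℂ) (hdeg : 2 ≤ f.natDegree)
    (a b : ℂ) (ha : a ≠ 0)
    (hcomm : (C a * X + C b).comp f = f.comp (C a * X + C b))
    (R' : ℝ)
    (Φ : ℂ → ℂ)
    (hΦan : AnalyticOnNhd ℂ Φ {z : ℂ | R' < ‖z‖})
    (hΦtang : Filter.Tendsto (fun z : ℂ => Φ z / z)
      (Filter.comap (fun z : ℂ => ‖z‖) Filter.atTop) (nhds 1))
    (hΦfun : ∀ z : ℂ, R' < ‖z‖ → R' < ‖f.eval z‖ →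
      Φ (f.eval z) = Φ z ^ f.natDegree) :
    ∃ ζ : ℂ, ζ ^ (f.natDegree - 1) = 1 ∧
      ∃ R'' : ℝ, R' ≤ R'' ∧ ∀ z : ℂ, R'' < ‖z‖ → Φ (a * z + b) = ζ * Φ z := by
  rw [comap_norm_atTop] at hΦtang
  have hgrowth := f.eventually_norm_add_one_le_norm_eval <| by
    simpa using degree_lt_degree (p := (X : ℂ[X])) (q := f) (by rw [natDegree_X]; omega)
  have hΦne : ∀ᶠ z in cobounded ℂ, Φ z ≠ 0 :=
    (hΦtang.eventually_ne one_ne_zero).mono fun z hz h => hz (by simp [h])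
  obtain ⟨R, hR'R, hR⟩ := exists_forall_lt_norm_of_eventually_cobounded ((hgrowth.and hΦne).and
    ((tendsto_affine_cobounded ha b).eventually (hgrowth.and (tendsto_norm_cobounded_atTop.eventually_gt_atTop R')))) R'
  have hcomm_eval : ∀ z, a * f.eval z + b = f.eval (a * z + b) := fun z => by
    simpa [eval_comp] using congrArg (eval z) hcomm
  have hfun : ∀ z, R < ‖z‖ → Φ (a * f.eval z + b) / Φ (f.eval z) =
      (Φ (a * z + b) / Φ z) ^ f.natDegree := fun z hz => by
    obtain ⟨⟨hgrow_z, -⟩, hgrow_L, hL_large⟩ := hR z hz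
    have hz' : R' < ‖z‖ := hR'R.trans_lt hz
    rw [hcomm_eval, hΦfun _ hz' (by linarith), hΦfun _ hL_large (by linarith), div_pow]
  have hdiff : DifferentiableOn ℂ (fun z => Φ (a * z + b) / Φ z) {z | R < ‖z‖} := fun z hz =>
    (((hΦan _ (hR z hz).2.2).differentiableAt.comp z (by fun_prop)).div
      (hΦan z (hR'R.trans_lt hz)).differentiableAt (hR z hz).1.2).differentiableWithinAt
  obtain ⟨hconst, hroot⟩ := eqOn_const_and_pow_pred_eq_one_of_eq_pow_comp (by omega) ha
    (fun z hz => (hR z hz).1.1) hfun hdiff (tendsto_div_comp_affine hΦtang ha b)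
  exact ⟨a, hroot, R, hR'R, fun z hz => (div_eq_iff (hR z hz).1.2).mp (hconst hz)⟩

theorem stmt16
    (f : Polynomial ℂ) (hmonic : f.Monic) (hdeg : 2 ≤ f.natDegree)
    (a b : ℂ) (ha : a ≠ 0)
    (hcomm : (C a * X + C b).comp f = f.comp (C a * X + C b))
    (R' : ℝ) (hR' : 0 < R')
    (Φ : ℂ → ℂ)
    (hΦan : AnalyticOnNhd ℂ Φ {z : ℂ | R' < ‖z‖})
    (hΦtang : Filter.Tendsto (fun z : ℂ => Φ z / z)
      (Filter.comap (fun z : ℂ => ‖z‖) Filter.atTop) (nhds 1))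
    (hΦfun : ∀ z : ℂ, R' < ‖z‖ → R' < ‖f.eval z‖ →
      Φ (f.eval z) = Φ z ^ f.natDegree) :
    ∃ ζ : ℂ, ζ ^ (f.natDegree - 1) = 1 ∧
      ∃ R'' : ℝ, R' ≤ R'' ∧ ∀ z : ℂ, R'' < ‖z‖ → Φ (a * z + b) = ζ * Φ z :=
  stmt16_general f hdeg a b ha hcomm R' Φ hΦan hΦtang hΦfun
end

section
/- Let K be a number field, realized as a subfield of a fixed algebraic closure ℚ̄ of ℚ. Let f ∈ K[X] be a monic non-exceptional polynomial of degree d ≥ 2, and let α ∈ K be such that |f^∘n(α)|_v → ∞ as n → ∞ for some finite place v of K which is of good reduction for f and co-prime to d. Let P ∈ K[X,Y] be irreducible in ℚ̄[X,Y] and C = {(x,y) ∈ ℚ̄² : P(x,y) = 0}. Suppose C is pre-periodic under the coordinatewise action of (f, f): there exist integers k ≥ 0 and j ≥ 1 with {(f^∘(k+j)(x), f^∘(k+j)(y)) : (x,y) ∈ C} = {(f^∘k(x), f^∘k(y)) : (x,y) ∈ C}. If C contains a point (x,y) with x ∈ G_α and y ∈ G_α, then there exist n, m ≥ 0 such that f^∘n(x)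 = f^∘m(y) for every (x,y) ∈ C. -/
open Polynomial

/-- The `n`-th iterate `f^∘n` of a polynomial, as a polynomial. -/
noncomputable def polyIter {R : Type*} [CommSemiring R] (f : R[X]) : ℕ → R[X]
  | 0 => X
  | n + 1 => (polyIter f n).comp f

/-- Evaluation of the `n`-th iterate of `f ∈ K[X]` at a point of a `K`-algebra `A`. -/
noncomputable def iterEval {K A : Type*} [CommSemiring K] [CommSemiring A] [Algebra K A]
    (f : K[X]) (n : ℕ) (x : A) : A :=
  Polynomial.aeval x (polyIter f n)

/-- The grand orbit `G_a = {β : f^∘n(β) = f^∘m(a) for some n, m ≥ 0}`. -/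
def grandOrbit {K A : Type*} [CommSemiring K] [CommSemiring A] [Algebra K A]
    (f : K[X]) (a : A) : Set A :=
  {β | ∃ n m : ℕ, iterEval f n β = iterEval f m a}

/-- A polynomial of degree `d` over a field is exceptional if it is linearly conjugate to
`X^d` or to `±T_d`, where `T_d` is normalized by `T_d(X + X⁻¹) = X^d + X^(-d)`. -/
def IsExceptional {F : Type*} [Field F] (f : F[X]) : Prop :=
  ∃ a b : F, a ≠ 0 ∧
    ((C a * X + C b).comp f = (X ^ f.natDegree : F[X]).comp (C a * X + C b) ∨
     (C a * X + C b).comp f = (dickson 1 1 f.natDegree).comp (C a * X + C b) ∨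
     (C a * X + C b).comp f = (-dickson 1 1 f.natDegree).comp (C a * X + C b))

/-!
Let `p ∈ C` have both coordinates in the grand orbit of `α`, so that `f^N(p₁) = f^M(p₂)`.
Pre-periodicity of `C` yields, for every `t`, a point `w_t ∈ C` with
`f^k(w_t) = f^(k + t j)(p)` coordinatewise; all the `w_t` lie on the curve
`f^(N + k)(x) = f^(M + k)(y)`. Since `|f^n(α)|_v → ∞`, the point `α`, and with it `p₁`,
is not preperiodic, so the `w_t` are pairwise distinct. Finally, an irreducible plane curve
meeting the curve `g(x) = h(y)` (with `h` nonconstant) in infinitely many points lies on it: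
otherwise the two equations would be coprime, and a nonzero resultant would confine their
common zeros to finitely many vertical lines, each carrying finitely many of them.
-/

open Function Polynomial.Bivariate

section Dynamics

variable {α : Type*}

lemma Function.injective_iterate_apply_of_tendsto {β : Type*} [Preorder β] [NoMaxOrder β]
    {g : α → α} {x : α} {u : α → β}
    (hu : Filter.Tendsto (fun n => u (g^[n] x)) Filter.atTop Filter.atTop) :
    Injective fun n => g^[n] x := by
  refine Injective.of_lt_imp_ne fun a b hlt hab => ?_
  have hper : IsPeriodicPt g (b - a) (g^[a] x) := by
    rw [IsPeriodicPt, IsFixedPt, ← iterate_add_apply, Nat.sub_add_cancel hlt.le, hab]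
  have hconst : ∀ s, u (g^[a + (b - a) * s] x) = u (g^[a] x) := fun s => by
    rw [add_comm, iterate_add_apply, (hper.mul_const s).eq]
  have hlim : Filter.Tendsto (fun s => a + (b - a) * s) Filter.atTop Filter.atTop :=
    Filter.tendsto_atTop_mono
      (fun s => le_add_left (Nat.le_mul_of_pos_left s (Nat.sub_pos_of_lt hlt))) Filter.tendsto_id
  exact Filter.not_tendsto_const_atTop _ _ <| by
    simpa only [Function.comp_def, hconst] using hu.comp hlim

lemma Function.injective_iterate_apply_of_iterate_eq {g : α → α} {x y : α} {m n : ℕ}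
    (h : g^[n] x = g^[m] y) (hy : Injective fun k => g^[k] y) :
    Injective fun k => g^[k] x := by
  intro a b hab
  have key : ∀ k, g^[k + m] y = g^[n] (g^[k] x) := fun k => by
    rw [iterate_add_apply, ← h, ← iterate_add_apply, ← iterate_add_apply, add_comm]
  exact Nat.add_right_cancel (hy ((key a).trans ((congrArg _ hab).trans (key b).symm)))

lemma Set.image_iterate_add_mul_eq {g : α → α} {C : Set α} {k j : ℕ}
    (h : g^[k + j] '' C = g^[k] '' C) (t : ℕ) : g^[k + t * j] '' C = g^[k] '' C := by
  induction t with
  | zero => simp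
  | succ t ih =>
    rw [show k + (t + 1) * j = t * j + (k + j) by ring, iterate_add, Set.image_comp, h,
      ← Set.image_comp, ← iterate_add, add_comm, ih]

lemma infinite_setOf_iterate_eq_of_image_iterate_eq {g : α → α} {C : Set (α × α)} {k j : ℕ}
    (hj : 0 < j) (hC : Prod.map g^[k + j] g^[k + j] '' C = Prod.map g^[k] g^[k] '' C)
    {p : α × α} (hp : p ∈ C) {N M : ℕ} (hNM : g^[N] p.1 = g^[M] p.2)
    (hinj : Injective fun n => g^[n] p.1) :
    {z ∈ C | g^[N + k] z.1 = g^[M + k] z.2}.Infinite := by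
  simp only [← Prod.map_iterate] at hC
  have hmem : ∀ t, (Prod.map g g)^[k + t * j] p ∈ (Prod.map g g)^[k] '' C := fun t =>
    Set.image_iterate_add_mul_eq hC t ▸ Set.mem_image_of_mem _ hp
  choose w hwC hw using hmem
  simp only [Prod.map_iterate, Prod.ext_iff, Prod.map_fst, Prod.map_snd] at hw
  refine Set.infinite_of_injective_forall_mem (f := w) (fun s t hst => ?_) fun t => ⟨hwC t, ?_⟩
  · have := (hw s).1.symm.trans ((congrArg (fun z => g^[k] z.1) hst).trans (hw t).1)
    simpa [hj.ne'] using hinj this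
  · rw [iterate_add_apply, iterate_add_apply, (hw t).1, (hw t).2,
      (Commute.iterate_iterate_self g N _).eq, hNM, ← (Commute.iterate_iterate_self g M _).eq]

end Dynamics

section PolyIter

variable {K A : Type*}

lemma iterEval_eq_iterate [CommSemiring K] [CommSemiring A] [Algebra K A] (f : K[X]) (n : ℕ) :
    iterEval f n = (fun x : A => aeval x f)^[n] := by
  induction n with
  | zero => ext x; simp [iterEval, polyIter]
  | succ n ih => ext x; rw [iterate_succ_apply, ← ih, iterEval, polyIter, aeval_comp]; rfl

lemma iterEval_eq_eval_map [CommSemiring K] [CommSemiring A] [Algebra K A] (f : K[X]) (n : ℕ)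
    (x : A) : iterEval f n x = ((polyIter f n).map (algebraMap K A)).eval x :=
  (eval_map_algebraMap _ _).symm

lemma natDegree_polyIter [CommSemiring K] [NoZeroDivisors K] [Nontrivial K] (f : K[X]) (n : ℕ) :
    (polyIter f n).natDegree = f.natDegree ^ n := by
  induction n with
  | zero => simp [polyIter]
  | succ n ih => rw [polyIter, natDegree_comp, ih, pow_succ]

lemma iterEval_algebraMap [CommSemiring K] [CommSemiring A] [Algebra K A] (f : K[X]) (n : ℕ)
    (a : K) : iterEval f n (algebraMap K A a) = algebraMap K A (iterEval f n a) :=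
  aeval_algebraMap_apply_eq_algebraMap_eval _ _

lemma injective_iterEval_algebraMap_of_tendsto [Field K] [CommSemiring A] [Nontrivial A]
    [Algebra K A] {β : Type*} [Preorder β] [NoMaxOrder β] {f : K[X]} {a : K} {u : K → β}
    (hu : Filter.Tendsto (fun n => u ((polyIter f n).eval a)) Filter.atTop Filter.atTop) :
    Injective fun n => iterEval f n (algebraMap K A a) := by
  have hK : Injective fun n => iterEval f n a := by
    change Filter.Tendsto (fun n => u (iterEval f n a)) _ _ at hu
    simp only [iterEval_eq_iterate] at hu ⊢
    exact injective_iterate_apply_of_tendsto hu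
  simpa only [iterEval_algebraMap, comp_def] using (algebraMap K A).injective.comp hK

lemma exists_iterEval_eq_of_mem_grandOrbit [CommSemiring K] [CommSemiring A] [Algebra K A]
    {f : K[X]} {a x y : A} (hx : x ∈ grandOrbit f a) (hy : y ∈ grandOrbit f a) :
    ∃ N M, iterEval f N x = iterEval f M y := by
  obtain ⟨n₁, m₁, h₁⟩ := hx
  obtain ⟨n₂, m₂, h₂⟩ := hy
  refine ⟨m₂ + n₁, m₁ + n₂, ?_⟩
  simp only [iterEval_eq_iterate, iterate_add_apply] at *
  rw [h₁, h₂, (Commute.iterate_iterate_self _ m₂ m₁).eq]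

end PolyIter

section Bivariate

lemma exists_mul_add_mul_eq_C_of_not_dvd {R : Type*} [CommRing R] [IsDomain R] [IsGCDMonoid R]
    {p q : R[X]} (hp : Irreducible p) (hpq : ¬ p ∣ q) :
    ∃ a b : R[X], ∃ d : R, d ≠ 0 ∧ p * a + q * b = C d := by
  obtain hp0 | hp0 := eq_or_ne p.natDegree 0
  · obtain ⟨c, rfl⟩ := natDegree_eq_zero.mp hp0
    exact ⟨1, 0, c, fun hc => hp.ne_zero (by simp [hc]), by simp⟩
  let K := FractionRing R
  have hinj : Function.Injective (algebraMap R K) := IsFractionRing.injective R K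
  have hprim := hp.isPrimitive hp0
  -- Gauss's lemma: over `Frac R`, `p` stays irreducible and still does not divide `q`.
  have hcop : IsCoprime (p.map (algebraMap R K)) (q.map (algebraMap R K)) :=
    (hprim.irreducible_iff_irreducible_map_fraction_map.mp hp).coprime_iff_not_dvd.mpr
      fun h => hpq (hprim.dvd_of_fraction_map_dvd_fraction_map h)
  have hres : resultant p q ≠ 0 := by
    have := resultant_ne_zero _ _ hcop
    rwa [natDegree_map_eq_of_injective hinj, natDegree_map_eq_of_injective hinj,
      resultant_map_map, map_ne_zero_iff _ hinj] at this
  obtain ⟨a, b, -, -, h⟩ := exists_mul_add_mul_eq_C_resultant p q le_rfl le_rfl (.inl hp0)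
  exact ⟨a, b, _, hres, h⟩

variable {F : Type*} [Field F]

lemma finite_setOf_eval_eq_zero_and_evalEval_eq_zero {d : F[X]} (hd : d ≠ 0) {q : F[X][Y]}
    (hq : ∀ x, q.map (evalRingHom x) ≠ 0) :
    {z : F × F | d.eval z.1 = 0 ∧ q.evalEval z.1 z.2 = 0}.Finite := by
  refine ((finite_setOfPred_isRoot hd).biUnion fun x _ =>
    (finite_setOfPred_isRoot (hq x)).image (Prod.mk x)).subset ?_
  rintro ⟨x, y⟩ ⟨hx, hy⟩
  refine Set.mem_biUnion hx ⟨y, ?_, rfl⟩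
  rwa [Set.mem_ofPred_eq, IsRoot, map_evalRingHom_eval]

lemma dvd_of_infinite_setOf_evalEval_eq_zero {p q : F[X][Y]} (hp : Irreducible p)
    (hq : ∀ x, q.map (evalRingHom x) ≠ 0)
    (hinf : {z : F × F | p.evalEval z.1 z.2 = 0 ∧ q.evalEval z.1 z.2 = 0}.Infinite) :
    p ∣ q := by
  by_contra hpq
  obtain ⟨a, b, d, hd, h⟩ := exists_mul_add_mul_eq_C_of_not_dvd hp hpq
  refine hinf ((finite_setOf_eval_eq_zero_and_evalEval_eq_zero hd hq).subset ?_)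
  rintro ⟨x, y⟩ ⟨hpz, hqz⟩
  refine ⟨?_, hqz⟩
  simpa [hpz, hqz, evalEval_C] using (congrArg (evalEval x y) h).symm

lemma evalEval_equivMvPolynomial_symm {R : Type*} [CommSemiring R] (Q : MvPolynomial (Fin 2) R)
    (x y : R) : ((Bivariate.equivMvPolynomial R).symm Q).evalEval x y =
      MvPolynomial.eval ![x, y] Q := by
  induction Q using MvPolynomial.induction_on with
  | C a => simp
  | add P Q hP hQ => simp [hP, hQ]
  | mul_X P i hP => fin_cases i <;> simp [hP, evalEval_C]


lemma map_evalRingHom_C_sub_map_C (g h : F[X]) (x : F) :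
    (C g - h.map C).map (evalRingHom x) = C (g.eval x) - h := by
  have hC : (evalRingHom x).comp C = RingHom.id F := RingHom.ext fun _ => eval_C
  rw [Polynomial.map_sub, map_C, map_map, hC, map_id, coe_evalRingHom]

lemma eval_eq_eval_of_infinite_setOf {Q : MvPolynomial (Fin 2) F} (hQ : Irreducible Q)
    {g h : F[X]} (hh : 0 < h.natDegree)
    (hinf : {z : F × F | MvPolynomial.eval ![z.1, z.2] Q = 0 ∧ g.eval z.1 = h.eval z.2}.Infinite)
    {x y : F} (hxy : MvPolynomial.eval ![x, y] Q = 0) : g.eval x = h.eval y := by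
  set p := (Bivariate.equivMvPolynomial F).symm Q
  have hp : Irreducible p := (MulEquiv.irreducible_iff (Bivariate.equivMvPolynomial F).symm).mpr hQ
  have hq : ∀ x, (C g - h.map C).map (evalRingHom x) ≠ 0 := by
    intro x h0
    rw [map_evalRingHom_C_sub_map_C, sub_eq_zero] at h0
    rw [← h0, natDegree_C] at hh
    exact hh.false
  have hqe : ∀ x y, (C g - h.map C).evalEval x y = g.eval x - h.eval y := fun x y => by
    rw [evalEval_sub, evalEval_C, evalEval_map_C]
  have hdvd : p ∣ C g - h.map C := by
    refine dvd_of_infinite_setOf_evalEval_eq_zero hp hq (hinf.mono ?_)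
    rintro z ⟨hz, hgh⟩
    exact ⟨(evalEval_equivMvPolynomial_symm Q _ _).trans hz, by rw [hqe, hgh, sub_self]⟩
  have := evalEval_dvd x y hdvd
  rwa [evalEval_equivMvPolynomial_symm, hxy, zero_dvd_iff, hqe, sub_eq_zero] at this

end Bivariate

theorem stmt17_general
    (K : IntermediateField ℚ (AlgebraicClosure ℚ))
    (f : Polynomial K) (hdeg : 2 ≤ f.natDegree)
    (α : K)
    -- a finite place of `K`: a nontrivial non-archimedean absolute value
    (v : AbsoluteValue K ℝ)
    -- `|f^∘n(α)|_v → ∞`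
    (hdiv : Filter.Tendsto (fun n : ℕ => v ((polyIter f n).eval α)) Filter.atTop Filter.atTop)
    (P : MvPolynomial (Fin 2) K)
    (hP : Irreducible (MvPolynomial.map (algebraMap K (AlgebraicClosure ℚ)) P))
    -- `C` is pre-periodic under the coordinatewise action of `(f, f)`
    (hpre : ∃ (k j : ℕ), 1 ≤ j ∧
      (fun p : AlgebraicClosure ℚ × AlgebraicClosure ℚ =>
          (iterEval f (k + j) p.1, iterEval f (k + j) p.2)) ''
        {p | MvPolynomial.eval ![p.1, p.2]
            (MvPolynomial.map (algebraMap K (AlgebraicClosure ℚ)) P) = 0} =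
      (fun p : AlgebraicClosure ℚ × AlgebraicClosure ℚ =>
          (iterEval f k p.1, iterEval f k p.2)) ''
        {p | MvPolynomial.eval ![p.1, p.2]
            (MvPolynomial.map (algebraMap K (AlgebraicClosure ℚ)) P) = 0})
    -- `C` contains a point with both coordinates in the grand orbit of `α`
    (hpt : ∃ p : AlgebraicClosure ℚ × AlgebraicClosure ℚ,
      MvPolynomial.eval ![p.1, p.2]
          (MvPolynomial.map (algebraMap K (AlgebraicClosure ℚ)) P) = 0 ∧
      p.1 ∈ grandOrbit f (algebraMap K (AlgebraicClosure ℚ) α) ∧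
      p.2 ∈ grandOrbit f (algebraMap K (AlgebraicClosure ℚ) α)) :
    ∃ n m : ℕ, ∀ x y : AlgebraicClosure ℚ,
      MvPolynomial.eval ![x, y]
          (MvPolynomial.map (algebraMap K (AlgebraicClosure ℚ)) P) = 0 →
      iterEval f n x = iterEval f m y := by
  obtain ⟨k, j, hj, hC⟩ := hpre
  obtain ⟨p, hp, hx, hy⟩ := hpt
  obtain ⟨N, M, hNM⟩ := exists_iterEval_eq_of_mem_grandOrbit hx hy
  obtain ⟨n₁, m₁, h₁⟩ := hx
  have hα := injective_iterEval_algebraMap_of_tendsto (A := AlgebraicClosure ℚ) hdiv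
  simp only [iterEval_eq_iterate] at hC hNM h₁ hα
  have hinf := infinite_setOf_iterate_eq_of_image_iterate_eq hj hC hp hNM
    (injective_iterate_apply_of_iterate_eq h₁ hα)
  refine ⟨N + k, M + k, fun x y hxy => ?_⟩
  simp only [iterEval_eq_eval_map]
  refine eval_eq_eval_of_infinite_setOf hP ?_ ?_ hxy
  · rw [natDegree_map, natDegree_polyIter]
    exact pow_pos (by omega) _
  · simp only [← iterEval_eq_eval_map, iterEval_eq_iterate]
    exact hinf

theorem stmt17
    (K : IntermediateField ℚ (AlgebraicClosure ℚ)) [FiniteDimensional ℚ K]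
    (f : Polynomial K) (hmonic : f.Monic) (hdeg : 2 ≤ f.natDegree)
    (hexc : ¬ IsExceptional f)
    (α : K)
    -- a finite place of `K`: a nontrivial non-archimedean absolute value
    (v : AbsoluteValue K ℝ)
    (hna : IsNonarchimedean (fun x : K => v x))
    (hnontriv : ∃ x : K, x ≠ 0 ∧ v x ≠ 1)
    -- good reduction for `f` at `v`
    (hgood : ∀ i < f.natDegree, v (f.coeff i / f.leadingCoeff) ≤ 1)
    -- `v` co-prime to `d`
    (hcop : v ((f.natDegree : K)) = 1)
    -- `|f^∘n(α)|_v → ∞`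
    (hdiv : Filter.Tendsto (fun n : ℕ => v ((polyIter f n).eval α)) Filter.atTop Filter.atTop)
    (P : MvPolynomial (Fin 2) K)
    (hP : Irreducible (MvPolynomial.map (algebraMap K (AlgebraicClosure ℚ)) P))
    -- `C` is pre-periodic under the coordinatewise action of `(f, f)`
    (hpre : ∃ (k j : ℕ), 1 ≤ j ∧
      (fun p : AlgebraicClosure ℚ × AlgebraicClosure ℚ =>
          (iterEval f (k + j) p.1, iterEval f (k + j) p.2)) ''
        {p | MvPolynomial.eval ![p.1, p.2]
            (MvPolynomial.map (algebraMap K (AlgebraicClosure ℚ)) P) = 0} =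
      (fun p : AlgebraicClosure ℚ × AlgebraicClosure ℚ =>
          (iterEval f k p.1, iterEval f k p.2)) ''
        {p | MvPolynomial.eval ![p.1, p.2]
            (MvPolynomial.map (algebraMap K (AlgebraicClosure ℚ)) P) = 0})
    -- `C` contains a point with both coordinates in the grand orbit of `α`
    (hpt : ∃ p : AlgebraicClosure ℚ × AlgebraicClosure ℚ,
      MvPolynomial.eval ![p.1, p.2]
          (MvPolynomial.map (algebraMap K (AlgebraicClosure ℚ)) P) = 0 ∧
      p.1 ∈ grandOrbit f (algebraMap K (AlgebraicClosure ℚ) α) ∧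
      p.2 ∈ grandOrbit f (algebraMap K (AlgebraicClosure ℚ) α)) :
    ∃ n m : ℕ, ∀ x y : AlgebraicClosure ℚ,
      MvPolynomial.eval ![x, y]
          (MvPolynomial.map (algebraMap K (AlgebraicClosure ℚ)) P) = 0 →
      iterEval f n x = iterEval f m y :=
  stmt17_general K f hdeg α v hdiv P hP hpre hpt
end
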